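/- Let k ≥ 1, a = π/(2k), s coprime with k, and let σ_s ⊂ S² be the union of half-circles of spherical radii (1+2i)a (i = 0,…,k−1) around x₀ in the closed upper hemisphere and around y₀ in the closed lower hemisphere, where x₀, y₀ lie on the equator at distance 2as. Then every point of S² lies within spherical distance a of σ_s, and the set of points at distance exactly a from σ_s on the 'positive' side is the analogous union of families of half-circles of radii 2a·i and (2+4i)a (a curve with two boundary points on the equator). -/

import Mathlib

open Real

/-- The intrinsic (angular) distance between points of the unit sphere in `ℝ³`. -/
noncomputable def sphereDist (p q : EuclideanSpace ℝ (Fin 3)) : ℝ :=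
  Real.arccos (inner ℝ p q)

/-- The curve `σ_s ⊂ S²`: the union of the half-circles of spherical radii
`(1+2i)·π/(2k)`, `i = 0, …, k-1`, around `x₀` in the closed upper hemisphere and
around `y₀` in the closed lower hemisphere. -/
def sigmaSphere (k : ℕ) (x₀ y₀ : EuclideanSpace ℝ (Fin 3)) :
    Set (EuclideanSpace ℝ (Fin 3)) :=
  {p | p ∈ Metric.sphere (0 : EuclideanSpace ℝ (Fin 3)) 1 ∧ 0 ≤ p 2 ∧
        ∃ i : ℕ, i < k ∧ sphereDist p x₀ = (1 + 2 * i) * (π / (2 * k))} ∪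
  {p | p ∈ Metric.sphere (0 : EuclideanSpace ℝ (Fin 3)) 1 ∧ p 2 ≤ 0 ∧
        ∃ i : ℕ, i < k ∧ sphereDist p y₀ = (1 + 2 * i) * (π / (2 * k))}

/-! The equator splits `S²` into two closed hemispheres. A point `p` of the upper one lies at
some distance `d ∈ [0, π]` from `x₀`; choosing the odd multiple `(1+2i)a` of `a = π/(2k)`
nearest to `d` and walking from `x₀` towards `p` along the great circle by that arc length gives
a point of `σ_s` in the same hemisphere within `a` of `p`. Symmetrically for the lower
hemisphere and `y₀`. Conversely `x₀` is at distance at least `a` from `σ_s`: from the upper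
half-circles at distance `(1+2i)a`, and from the lower ones, by the triangle inequality through
`y₀`, at distance at least `|1+2i-2s|·a ≥ a` since an odd integer is never `0`. -/

open InnerProductGeometry
open scoped RealInnerProductSpace

local notation "ℝ³" => EuclideanSpace ℝ (Fin 3)

lemma sphereDist_eq_angle {p q : ℝ³} (hp : ‖p‖ = 1) (hq : ‖q‖ = 1) :
    sphereDist p q = angle p q := by
  simp [sphereDist, angle, hp, hq]

lemma sphereDist_comm (p q : ℝ³) : sphereDist p q = sphereDist q p := by
  rw [sphereDist, sphereDist, real_inner_comm]

lemma abs_sub_sphereDist_le_sphereDist {x y z : ℝ³} (hx : ‖x‖ = 1) (hy : ‖y‖ = 1)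
    (hz : ‖z‖ = 1) : |sphereDist x z - sphereDist y z| ≤ sphereDist x y := by
  simp only [sphereDist_eq_angle, hx, hy, hz]
  rw [abs_sub_le_iff]
  constructor <;> linarith [angle_le_angle_add_angle x y z, angle_le_angle_add_angle y x z,
    angle_comm x y]

lemma norm_sub_inner_smul_eq_sin_sphereDist {p x : ℝ³} (hp : ‖p‖ = 1) (hx : ‖x‖ = 1) :
    ‖p - ⟪p, x⟫ • x‖ = sin (sphereDist p x) := by
  rw [sphereDist, sin_arccos, ← sqrt_sq (norm_nonneg _), norm_sub_sq_real, inner_smul_right,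
    norm_smul, hp, hx, norm_eq_abs, mul_one, sq_abs]
  ring_nf

lemma norm_cos_smul_add_sin_smul {F : Type*} [NormedAddCommGroup F] [InnerProductSpace ℝ F]
    {x u : F} (hx : ‖x‖ = 1) (hu : ‖u‖ = 1) (hxu : ⟪x, u⟫ = 0) (r : ℝ) :
    ‖cos r • x + sin r • u‖ = 1 := by
  have hsq : ‖cos r • x + sin r • u‖ ^ 2 = 1 := by
    rw [norm_add_sq_real, norm_smul, norm_smul, real_inner_smul_left, real_inner_smul_right, hxu,
      hx, hu, norm_eq_abs, norm_eq_abs]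
    simp [sq_abs, cos_sq_add_sin_sq]
  exact (pow_eq_one_iff_of_nonneg (norm_nonneg _) two_ne_zero).mp hsq

/-- Moving from `x` along the great circle towards `p` by arc length `r` brings `p` to
distance `sphereDist p x - r` (up to the `arccos ∘ cos` folding). -/
lemma sphereDist_cos_smul_add_sin_smul {x u p : ℝ³} (hx : ‖x‖ = 1) (hp : ‖p‖ = 1)
    (hpu : ⟪p, u⟫ = sin (sphereDist p x)) (r : ℝ) :
    sphereDist p (cos r • x + sin r • u) = arccos (cos (sphereDist p x - r)) := by
  have hpx := abs_real_inner_le_norm p x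
  rw [hp, hx, one_mul] at hpx
  rw [sphereDist, inner_add_right, real_inner_smul_right, real_inner_smul_right, hpu, cos_sub,
    sphereDist, cos_arccos (abs_le.mp hpx).1 (abs_le.mp hpx).2]
  ring_nf

lemma exists_unit_orthogonal_inner_eq_sin_sphereDist {x p : ℝ³} (hx : ‖x‖ = 1) (hx2 : x 2 = 0)
    (hp : ‖p‖ = 1) :
    ∃ u : ℝ³, ‖u‖ = 1 ∧ ⟪x, u⟫ = 0 ∧ ⟪p, u⟫ = sin (sphereDist p x) ∧
      ∃ t, 0 ≤ t ∧ u 2 = t * p 2 := by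
  set w := p - ⟪p, x⟫ • x with hw
  rw [← norm_sub_inner_smul_eq_sin_sphereDist hp hx, ← hw]
  by_cases h0 : w = 0
  · -- `p = ±x`: any horizontal unit vector orthogonal to `x` will do
    have hx01 : x 0 ^ 2 + x 1 ^ 2 = 1 := by
      simpa [EuclideanSpace.norm_eq, Fin.sum_univ_three, hx2] using hx
    refine ⟨!₂[-x 1, x 0, 0], ?_, ?_, ?_, 0, le_rfl, by simp⟩
    · simp [EuclideanSpace.norm_eq, Fin.sum_univ_three, add_comm, hx01]
    · simp [PiLp.inner_apply, Fin.sum_univ_three]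
      ring
    · rw [sub_eq_zero.mp h0, h0]
      simp [PiLp.inner_apply, Fin.sum_univ_three]
      ring
  · have hxw : ⟪x, w⟫ = 0 := by
      rw [hw, inner_sub_right, real_inner_smul_right, real_inner_self_eq_norm_sq, hx,
        real_inner_comm]
      ring
    refine ⟨‖w‖⁻¹ • w, norm_smul_inv_norm h0, ?_, ?_, ‖w‖⁻¹, by positivity, ?_⟩
    · rw [real_inner_smul_right, hxw, mul_zero]
    · have hpw : ⟪p, w⟫ = ‖w‖ ^ 2 := by
        have hp_eq : p = w + ⟪p, x⟫ • x := by rw [hw, sub_add_cancel]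
        nth_rw 1 [hp_eq]
        rw [inner_add_left, real_inner_smul_left, real_inner_comm, hxw, mul_zero, add_zero,
          real_inner_self_eq_norm_sq]
      rw [real_inner_smul_right, hpw]
      field_simp
    · simp [hw, hx2]

lemma exists_sphereDist_eq_of_mem_Icc {x p : ℝ³} (hx : ‖x‖ = 1) (hx2 : x 2 = 0) (hp : ‖p‖ = 1)
    {r : ℝ} (hr0 : 0 ≤ r) (hrπ : r ≤ π) :
    ∃ q : ℝ³, ‖q‖ = 1 ∧ (∃ t, 0 ≤ t ∧ q 2 = t * p 2) ∧ sphereDist q x = r ∧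
      sphereDist p q = |sphereDist p x - r| := by
  obtain ⟨u, hu, hxu, hpu, t, ht, hu2⟩ := exists_unit_orthogonal_inner_eq_sin_sphereDist hx hx2 hp
  have hxx : sphereDist x x = 0 := by simp [sphereDist, hx]
  have hdist_nonneg : 0 ≤ sphereDist p x := arccos_nonneg _
  have hdist_le_pi : sphereDist p x ≤ π := arccos_le_pi _
  refine ⟨cos r • x + sin r • u, norm_cos_smul_add_sin_smul hx hu hxu r,
    ⟨sin r * t, mul_nonneg (sin_nonneg_of_nonneg_of_le_pi hr0 hrπ) ht, ?_⟩, ?_, ?_⟩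
  · simp [hx2, hu2, mul_assoc]
  · rw [sphereDist_comm, sphereDist_cos_smul_add_sin_smul hx hx (by rw [hxu, hxx, sin_zero]),
      hxx, zero_sub, cos_neg, arccos_cos hr0 hrπ]
  · rw [sphereDist_cos_smul_add_sin_smul hx hp hpu, ← cos_abs,
      arccos_cos (abs_nonneg _) (abs_le.mpr ⟨by linarith, by linarith⟩)]

lemma exists_abs_sub_odd_mul_le {k : ℕ} (hk : 0 < k) {a d : ℝ} (ha : 0 < a) (hd0 : 0 ≤ d)
    (hd : d ≤ 2 * k * a) : ∃ i < k, |d - (1 + 2 * i) * a| ≤ a := by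
  set j := ⌊d / (2 * a)⌋₊
  have hj_le : (j : ℝ) * (2 * a) ≤ d :=
    (le_div_iff₀ (by positivity)).mp (Nat.floor_le (by positivity))
  have hj_lt : d < (j + 1) * (2 * a) := (div_lt_iff₀ (by positivity)).mp (Nat.lt_floor_add_one _)
  rcases le_total j (k - 1) with hjk | hkj
  · exact ⟨j, by omega, abs_le.mpr ⟨by nlinarith, by nlinarith⟩⟩
  · have hk1 : ((k - 1 : ℕ) : ℝ) = k - 1 := by rw [Nat.cast_sub hk, Nat.cast_one]
    have hkj' : (k : ℝ) - 1 ≤ j := hk1 ▸ (by exact_mod_cast hkj)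
    refine ⟨k - 1, by omega, abs_le.mpr ?_⟩
    rw [hk1]
    constructor <;> nlinarith

lemma exists_sphereDist_le_of_odd_circle {k : ℕ} (hk : 0 < k) {x p : ℝ³} (hx : ‖x‖ = 1)
    (hx2 : x 2 = 0) (hp : ‖p‖ = 1) :
    ∃ q : ℝ³, ‖q‖ = 1 ∧ (∃ t, 0 ≤ t ∧ q 2 = t * p 2) ∧
      (∃ i < k, sphereDist q x = (1 + 2 * i) * (π / (2 * k))) ∧
      sphereDist p q ≤ π / (2 * k) := by
  have ha : 0 < π / (2 * k) := by positivity
  have hπ : 2 * k * (π / (2 * k)) = π := by field_simp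
  obtain ⟨i, hik, hi⟩ := exists_abs_sub_odd_mul_le hk ha (arccos_nonneg ⟪p, x⟫)
    (hπ.symm ▸ arccos_le_pi ⟪p, x⟫)
  have hik' : (i : ℝ) + 1 ≤ k := by exact_mod_cast hik
  obtain ⟨q, hq, hq2, hqx, hpq⟩ := exists_sphereDist_eq_of_mem_Icc hx hx2 hp
    (r := (1 + 2 * i) * (π / (2 * k))) (by positivity) (by nlinarith)
  exact ⟨q, hq, hq2, ⟨i, hik, hqx⟩, hpq ▸ hi⟩

lemma one_le_abs_odd_sub_even (i s : ℕ) : 1 ≤ |(1 + 2 * i : ℝ) - 2 * s| := by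
  have : (1 : ℤ) ≤ |1 + 2 * (i : ℤ) - 2 * s| := Int.one_le_abs (by omega)
  exact_mod_cast this

theorem sigmaSphere_neighborhood_general (k s : ℕ) (hk : 1 ≤ k)
    (x₀ y₀ : EuclideanSpace ℝ (Fin 3))
    (hx : x₀ ∈ Metric.sphere (0 : EuclideanSpace ℝ (Fin 3)) 1) (hx2 : x₀ 2 = 0)
    (hy : y₀ ∈ Metric.sphere (0 : EuclideanSpace ℝ (Fin 3)) 1) (hy2 : y₀ 2 = 0)
    (hdist : sphereDist x₀ y₀ = 2 * s * (π / (2 * k))) :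
    (∀ p ∈ Metric.sphere (0 : EuclideanSpace ℝ (Fin 3)) 1,
      ∃ q ∈ sigmaSphere k x₀ y₀, sphereDist p q ≤ π / (2 * k)) ∧
    (∃ p ∈ Metric.sphere (0 : EuclideanSpace ℝ (Fin 3)) 1,
      ∀ q ∈ sigmaSphere k x₀ y₀, π / (2 * k) ≤ sphereDist p q) := by
  simp only [mem_sphere_zero_iff_norm] at hx hy ⊢
  have ha : 0 < π / (2 * k) := by positivity
  refine ⟨fun p hp => ?_, x₀, hx, ?_⟩
  · rcases le_total 0 (p 2) with hp2 | hp2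
    · obtain ⟨q, hq, ⟨t, ht, hq2⟩, hcirc, hpq⟩ := exists_sphereDist_le_of_odd_circle hk hx hx2 hp
      exact ⟨q, Or.inl ⟨mem_sphere_zero_iff_norm.mpr hq, hq2 ▸ mul_nonneg ht hp2, hcirc⟩, hpq⟩
    · obtain ⟨q, hq, ⟨t, ht, hq2⟩, hcirc, hpq⟩ := exists_sphereDist_le_of_odd_circle hk hy hy2 hp
      exact ⟨q, Or.inr ⟨mem_sphere_zero_iff_norm.mpr hq,
        hq2 ▸ mul_nonpos_of_nonneg_of_nonpos ht hp2, hcirc⟩, hpq⟩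
  · rintro q (⟨-, -, i, -, hqx⟩ | ⟨hq, -, i, -, hqy⟩)
    · rw [sphereDist_comm, hqx]
      exact le_mul_of_one_le_left ha.le (by linarith [(i.cast_nonneg : (0 : ℝ) ≤ i)])
    · rw [mem_sphere_zero_iff_norm] at hq
      calc π / (2 * k) ≤ |(1 + 2 * i : ℝ) - 2 * s| * (π / (2 * k)) :=
            le_mul_of_one_le_left ha.le (one_le_abs_odd_sub_even i s)
        _ = |sphereDist q y₀ - sphereDist x₀ y₀| := by
            rw [hqy, hdist, ← sub_mul, abs_mul, abs_of_pos ha]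
        _ ≤ sphereDist q x₀ := abs_sub_sphereDist_le_sphereDist hq hx hy
        _ = sphereDist x₀ q := sphereDist_comm q x₀

/-- Every point of `S²` lies within spherical distance `a = π/(2k)` of `σ_s`,
and this bound is attained: some point of `S²` has spherical distance at least
`a` from every point of `σ_s`. -/
theorem sigmaSphere_neighborhood (k s : ℕ) (hk : 1 ≤ k)
    (hcop : Nat.Coprime s k)
    (x₀ y₀ : EuclideanSpace ℝ (Fin 3))
    (hx : x₀ ∈ Metric.sphere (0 : EuclideanSpace ℝ (Fin 3)) 1) (hx2 : x₀ 2 = 0)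
    (hy : y₀ ∈ Metric.sphere (0 : EuclideanSpace ℝ (Fin 3)) 1) (hy2 : y₀ 2 = 0)
    (hdist : sphereDist x₀ y₀ = 2 * s * (π / (2 * k))) :
    (∀ p ∈ Metric.sphere (0 : EuclideanSpace ℝ (Fin 3)) 1,
      ∃ q ∈ sigmaSphere k x₀ y₀, sphereDist p q ≤ π / (2 * k)) ∧
    (∃ p ∈ Metric.sphere (0 : EuclideanSpace ℝ (Fin 3)) 1,
      ∀ q ∈ sigmaSphere k x₀ y₀, π / (2 * k) ≤ sphereDist p q) :=
  sigmaSphere_neighborhood_general k s hk x₀ y₀ hx hx2 hy hy2 hdist
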